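/- arXiv:2109.03844 — 3 statements merged into one kernel-verified Lean document; each statement's English description precedes it below -/
import Mathlib

section
/- For all α > 0, β > 0 and λ ∈ ℝ, the integral over (0,∞) of Φ(λ a(y;α,β)) φ(a(y;α,β)) a'(y;α,β) with respect to y equals 1/2. (Equivalently, E[w(T)] = 1/2 for the weight w(y) = Φ(λ a(y;α,β)) and T distributed with the BS(α,β) density, so the skew-BS density f(y;α,β,λ) = w(y) f_T(y;α,β) / E[w(T)] integrates to 1.) -/
/-!
The substitution `x = a(y; α, β)` maps `(0, ∞)` increasingly onto `ℝ` with Jacobian `a'`, so the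
integral equals `∫ Φ(λx) φ(x) dx`. Since `φ` is even and `Φ(t) + Φ(-t) = 1`, the integrand and its
reflection add up to `φ`, whence the integral is half of `∫ φ = 1`.
-/

open Real MeasureTheory Set

/-- Standard normal PDF. -/
noncomputable def stdPhi (x : ℝ) : ℝ := (Real.sqrt (2 * Real.pi))⁻¹ * Real.exp (-x ^ 2 / 2)

/-- Standard normal CDF. -/
noncomputable def stdPhiCDF (x : ℝ) : ℝ := ∫ t in Set.Iic x, stdPhi t

/-- The function a(y; α, β). -/
noncomputable def aBS (α β y : ℝ) : ℝ := (1 / α) * (Real.sqrt (y / β) - Real.sqrt (β / y))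

/-- The derivative a'(y; α, β). -/
noncomputable def aBS' (α β y : ℝ) : ℝ :=
  (1 / (2 * α * y)) * (Real.sqrt (y / β) + Real.sqrt (β / y))

theorem integral_mul_eq_half_integral_of_add_neg_eq_one {p G : ℝ → ℝ}
    (hp : ∀ x, p (-x) = p x) (hG : ∀ x, G x + G (-x) = 1)
    (hint : Integrable fun x ↦ G x * p x) :
    ∫ x, G x * p x = (∫ x, p x) / 2 := by
  have hsum : ∀ x, G x * p x + G (-x) * p (-x) = p x := fun x ↦ by
    rw [hp, ← add_mul, hG, one_mul]
  have hrefl : ∫ x, G (-x) * p (-x) = ∫ x, G x * p x :=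
    integral_neg_eq_self (fun x ↦ G x * p x) volume
  have htotal : (∫ x, G x * p x) + ∫ x, G (-x) * p (-x) = ∫ x, p x := by
    rw [← integral_add hint hint.comp_neg]
    simp only [hsum]
  linarith

section StandardNormal

open ProbabilityTheory

theorem stdPhi_eq_gaussianPDFReal : stdPhi = gaussianPDFReal 0 1 := by
  ext x
  simp [stdPhi, gaussianPDFReal]

theorem stdPhi_neg (x : ℝ) : stdPhi (-x) = stdPhi x := by
  simp [stdPhi]

theorem stdPhi_nonneg (x : ℝ) : 0 ≤ stdPhi x := by
  rw [stdPhi_eq_gaussianPDFReal]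
  exact gaussianPDFReal_nonneg 0 1 x

theorem integrable_stdPhi : Integrable stdPhi := by
  rw [stdPhi_eq_gaussianPDFReal]
  exact integrable_gaussianPDFReal 0 1

theorem integral_stdPhi : ∫ x, stdPhi x = 1 := by
  rw [stdPhi_eq_gaussianPDFReal]
  exact integral_gaussianPDFReal_eq_one 0 one_ne_zero

theorem stdPhiCDF_add_stdPhiCDF_neg (x : ℝ) : stdPhiCDF x + stdPhiCDF (-x) = 1 := by
  have hupper : stdPhiCDF (-x) = ∫ t in Ioi x, stdPhi t := by
    rw [stdPhiCDF, ← neg_neg x, ← integral_comp_neg_Iic, neg_neg]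
    simp_rw [stdPhi_neg]
  rw [stdPhiCDF, hupper, intervalIntegral.integral_Iic_add_Ioi integrable_stdPhi.integrableOn
    integrable_stdPhi.integrableOn, integral_stdPhi]

theorem stdPhiCDF_nonneg (x : ℝ) : 0 ≤ stdPhiCDF x :=
  setIntegral_nonneg measurableSet_Iic fun t _ ↦ stdPhi_nonneg t

theorem stdPhiCDF_le_one (x : ℝ) : stdPhiCDF x ≤ 1 := by
  linarith [stdPhiCDF_add_stdPhiCDF_neg x, stdPhiCDF_nonneg (-x)]

theorem monotone_stdPhiCDF : Monotone stdPhiCDF := fun _ _ hab ↦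
  setIntegral_mono_set integrable_stdPhi.integrableOn (ae_of_all _ stdPhi_nonneg)
    (Iic_subset_Iic.mpr hab).eventuallyLE

theorem integrable_stdPhiCDF_comp_mul_stdPhi (lam : ℝ) :
    Integrable fun x ↦ stdPhiCDF (lam * x) * stdPhi x := by
  refine integrable_stdPhi.mono' ?_ (ae_of_all _ fun x ↦ ?_)
  · exact ((monotone_stdPhiCDF.measurable.comp (measurable_const_mul lam)).mul
      (stdPhi_eq_gaussianPDFReal ▸ measurable_gaussianPDFReal 0 1)).aestronglyMeasurable
  · rw [norm_mul, Real.norm_of_nonneg (stdPhiCDF_nonneg _), Real.norm_of_nonneg (stdPhi_nonneg _)]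
    exact mul_le_of_le_one_left (stdPhi_nonneg x) (stdPhiCDF_le_one _)

theorem integral_stdPhiCDF_comp_mul_stdPhi (lam : ℝ) :
    ∫ x, stdPhiCDF (lam * x) * stdPhi x = 1 / 2 := by
  rw [integral_mul_eq_half_integral_of_add_neg_eq_one stdPhi_neg
    (fun x ↦ by rw [mul_neg]; exact stdPhiCDF_add_stdPhiCDF_neg _)
    (integrable_stdPhiCDF_comp_mul_stdPhi lam), integral_stdPhi]

end StandardNormal

section BirnbaumSaunders

variable {α β : ℝ}

theorem hasDerivAt_aBS (hβ : 0 < β) {y : ℝ} (hy : 0 < y) :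
    HasDerivAt (aBS α β) (aBS' α β y) y := by
  have hyβ : 0 < y / β := div_pos hy hβ
  have hβy : 0 < β / y := div_pos hβ hy
  set u := √(y / β)
  set v := √(β / y)
  have hu : u ^ 2 * β = y := by rw [sq_sqrt hyβ.le]; field_simp
  have hv : v ^ 2 * y = β := by rw [sq_sqrt hβy.le]; field_simp
  have hu0 : u ≠ 0 := (sqrt_pos.mpr hyβ).ne'
  have hv0 : v ≠ 0 := (sqrt_pos.mpr hβy).ne'
  have hsqrt_left : HasDerivAt (fun y ↦ √(y / β)) (1 / (2 * u) * (1 / β)) y :=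
    (hasDerivAt_sqrt hyβ.ne').comp y ((hasDerivAt_id y).div_const β)
  have hsqrt_right : HasDerivAt (fun y ↦ √(β / y)) (1 / (2 * v) * (β * -(y ^ 2)⁻¹)) y := by
    have hdiv : HasDerivAt (fun y : ℝ ↦ β / y) (β * -(y ^ 2)⁻¹) y := by
      simpa [div_eq_mul_inv] using (hasDerivAt_inv hy.ne').const_mul β
    exact (hasDerivAt_sqrt hβy.ne').comp y hdiv
  refine ((hsqrt_left.sub hsqrt_right).const_mul (1 / α)).congr_deriv ?_
  rw [aBS', show 1 / (2 * α * y) = 1 / α * (1 / (2 * y)) by ring, mul_assoc]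
  congr 1
  field_simp
  linear_combination (-(v * y)) * hu - (u * β) * hv

theorem monotoneOn_aBS (hα : 0 ≤ α) (hβ : 0 ≤ β) : MonotoneOn (aBS α β) (Ioi 0) := by
  intro a ha b hb hab
  have hleft : √(a / β) ≤ √(b / β) := sqrt_le_sqrt (div_le_div_of_nonneg_right hab hβ)
  have hright : √(β / b) ≤ √(β / a) := sqrt_le_sqrt (div_le_div_of_nonneg_left hβ ha hab)
  exact mul_le_mul_of_nonneg_left (by linarith) (one_div_nonneg.mpr hα)

theorem aBS_mul_sq (hβ : 0 < β) {u : ℝ} (hu : 0 < u) : aBS α β (β * u ^ 2) = (u - u⁻¹) / α := by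
  have hright : β / (β * u ^ 2) = u⁻¹ ^ 2 := by field_simp
  rw [aBS, mul_div_cancel_left₀ _ hβ.ne', hright, sqrt_sq hu.le, sqrt_sq (inv_pos.mpr hu).le]
  ring

theorem exists_pos_sub_inv_eq (c : ℝ) : ∃ u > 0, u - u⁻¹ = c := by
  -- the positive root of `u ^ 2 - c * u - 1`
  have hdisc : √(c ^ 2 + 4) ^ 2 = c ^ 2 + 4 := sq_sqrt (by positivity)
  have hc : |c| < √(c ^ 2 + 4) := by
    nlinarith [sq_abs c, abs_nonneg c, sqrt_nonneg (c ^ 2 + 4)]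
  have hpos : 0 < c + √(c ^ 2 + 4) := by linarith [neg_abs_le c]
  refine ⟨(c + √(c ^ 2 + 4)) / 2, by positivity, ?_⟩
  field_simp [hpos.ne']
  linear_combination hdisc

theorem image_aBS_Ioi (hα : α ≠ 0) (hβ : 0 < β) : aBS α β '' Ioi 0 = univ := by
  refine eq_univ_of_forall fun x ↦ ?_
  obtain ⟨u, hu, hux⟩ := exists_pos_sub_inv_eq (α * x)
  exact ⟨β * u ^ 2, mem_Ioi.mpr (by positivity), by rw [aBS_mul_sq hβ hu, hux, mul_div_cancel_left₀ _ hα]⟩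

theorem setIntegral_Ioi_comp_aBS_mul_aBS' (hα : 0 < α) (hβ : 0 < β) (g : ℝ → ℝ) :
    ∫ y in Ioi 0, g (aBS α β y) * aBS' α β y = ∫ x, g x := by
  have hchange := integral_image_eq_integral_deriv_smul_of_monotoneOn measurableSet_Ioi
    (fun y hy ↦ (hasDerivAt_aBS hβ hy).hasDerivWithinAt) (monotoneOn_aBS hα.le hβ.le) g
  rw [image_aBS_Ioi hα.ne' hβ, Measure.restrict_univ] at hchange
  simp_rw [hchange, smul_eq_mul, mul_comm]

end BirnbaumSaunders

/-- ∫_{(0,∞)} Φ(λ a(y;α,β)) φ(a(y;α,β)) a'(y;α,β) dy = 1/2, so that the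
skew-BS density 2 φ(a) Φ(λ a) a' integrates to one. -/
theorem skewBS_weight_integral (α β lam : ℝ) (hα : 0 < α) (hβ : 0 < β) :
    ∫ y in Set.Ioi (0 : ℝ),
      stdPhiCDF (lam * aBS α β y) * stdPhi (aBS α β y) * aBS' α β y = 1 / 2 := by
  rw [setIntegral_Ioi_comp_aBS_mul_aBS' hα hβ (fun x ↦ stdPhiCDF (lam * x) * stdPhi x)]
  exact integral_stdPhiCDF_comp_mul_stdPhi lam
end

section
/- Fix α > 0, β > 0, λ ∈ ℝ and q ∈ (0,1). If Q ∈ ℝ satisfies ∫_{−∞}^{Q} 2 φ(x) Φ(λ x) dx = q (i.e., Q is the 100q-th quantile of the skew-normal SN(λ) distribution), then the number Ξ_q = (β/4)(αQ + √((αQ)² + 4))² satisfies ∫_0^{Ξ_q} f(y;α,β,λ) dy = q; that is, Ξ_q is the 100q-th quantile of the skew-BS(α,β,λ) distribution. -/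
/-!
Substituting `y = β e^{2 arsinh(αx/2)}` inverts `a(·; α, β)`: writing `y = β e^{2t}` gives
`a(y) = (2/α) sinh t` and `a'(y) = cosh t / (α y)`. This substitution is an increasing
bijection `(-∞, Q] → (0, Ξ_q]`, and its derivative `αy / cosh t` cancels `a'(y)`, so it pulls
the skew-BS density on `(0, Ξ_q]` back to the skew-normal density on `(-∞, Q]`.
-/

open Real MeasureTheory Set

/-- The skew-BS(α, β, λ) density. -/
noncomputable def skewBSpdf (α β lam y : ℝ) : ℝ :=
  2 * stdPhi (aBS α β y) * stdPhiCDF (lam * aBS α β y) * aBS' α β y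

namespace SkewBS

lemma exp_two_mul_eq_exp_sq (t : ℝ) : exp (2 * t) = exp t ^ 2 := by
  rw [sq, ← exp_add, two_mul]

lemma sqrt_mul_exp_div {β : ℝ} (hβ : β ≠ 0) (t : ℝ) :
    √(β * exp (2 * t) / β) = exp t := by
  rw [mul_div_cancel_left₀ _ hβ, exp_two_mul_eq_exp_sq, sqrt_sq (exp_pos t).le]

lemma sqrt_div_mul_exp {β : ℝ} (hβ : β ≠ 0) (t : ℝ) :
    √(β / (β * exp (2 * t))) = exp (-t) := by
  rw [div_mul_cancel_left₀ hβ, sqrt_inv, exp_two_mul_eq_exp_sq, sqrt_sq (exp_pos t).le, exp_neg]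

lemma aBS_mul_exp {β : ℝ} (hβ : β ≠ 0) (α t : ℝ) :
    aBS α β (β * exp (2 * t)) = 2 / α * sinh t := by
  rw [aBS, sqrt_mul_exp_div hβ, sqrt_div_mul_exp hβ, sinh_eq]
  ring

lemma aBS'_mul_exp {β : ℝ} (hβ : β ≠ 0) (α t : ℝ) :
    aBS' α β (β * exp (2 * t)) = cosh t / (α * (β * exp (2 * t))) := by
  rw [aBS', sqrt_mul_exp_div hβ, sqrt_div_mul_exp hβ, cosh_eq]
  field_simp

noncomputable def bsTransform (α β x : ℝ) : ℝ := β * exp (2 * arsinh (α * x / 2))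

lemma bsTransform_eq (α β x : ℝ) :
    bsTransform α β x = β / 4 * (α * x + √((α * x) ^ 2 + 4)) ^ 2 := by
  have hsqrt : √(1 + (α * x / 2) ^ 2) = √((α * x) ^ 2 + 4) / 2 := by
    rw [show 1 + (α * x / 2) ^ 2 = ((α * x) ^ 2 + 4) / 2 ^ 2 by ring, sqrt_div' _ (by norm_num),
      sqrt_sq zero_le_two]
  rw [bsTransform, exp_two_mul_eq_exp_sq, exp_arsinh, hsqrt]
  ring

lemma bsTransform_pos {β : ℝ} (hβ : 0 < β) (α x : ℝ) : 0 < bsTransform α β x :=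
  mul_pos hβ (exp_pos _)

lemma strictMono_bsTransform {α β : ℝ} (hα : 0 < α) (hβ : 0 < β) :
    StrictMono (bsTransform α β) := fun x y hxy => by
  unfold bsTransform
  gcongr
  exact arsinh_strictMono (by gcongr)

lemma aBS_bsTransform {α β : ℝ} (hα : α ≠ 0) (hβ : β ≠ 0) (x : ℝ) :
    aBS α β (bsTransform α β x) = x := by
  rw [bsTransform, aBS_mul_exp hβ, sinh_arsinh]
  field_simp

lemma bsTransform_aBS {α β : ℝ} (hα : α ≠ 0) (hβ : 0 < β) {y : ℝ} (hy : 0 < y) :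
    bsTransform α β (aBS α β y) = y := by
  set t := log (y / β) / 2
  have hy' : y = β * exp (2 * t) := by
    rw [mul_div_cancel₀ _ two_ne_zero, exp_log (div_pos hy hβ), mul_div_cancel₀ _ hβ.ne']
  have hsinh : α * (2 / α * sinh t) / 2 = sinh t := by field_simp
  rw [hy', aBS_mul_exp hβ.ne', bsTransform, hsinh, arsinh_sinh]

lemma image_Iic_bsTransform {α β : ℝ} (hα : 0 < α) (hβ : 0 < β) (Q : ℝ) :
    bsTransform α β '' Iic Q = Ioc 0 (bsTransform α β Q) := by
  ext y
  constructor
  · rintro ⟨x, hx, rfl⟩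
    exact ⟨bsTransform_pos hβ α x, (strictMono_bsTransform hα hβ).monotone hx⟩
  · rintro ⟨hy, hyQ⟩
    refine ⟨aBS α β y, ?_, bsTransform_aBS hα.ne' hβ hy⟩
    rwa [mem_Iic, ← (strictMono_bsTransform hα hβ).le_iff_le, bsTransform_aBS hα.ne' hβ hy]

lemma hasDerivAt_bsTransform (α β x : ℝ) :
    HasDerivAt (bsTransform α β) (bsTransform α β x * α / √(1 + (α * x / 2) ^ 2)) x := by
  have h := ((((hasDerivAt_id x).const_mul α).div_const 2).arsinh.const_mul 2).exp.const_mul β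
  refine h.congr_deriv ?_
  simp only [bsTransform, id, smul_eq_mul]
  field_simp

lemma aBS'_bsTransform_mul_deriv {α β : ℝ} (hα : α ≠ 0) (hβ : β ≠ 0) (x : ℝ) :
    aBS' α β (bsTransform α β x) * (bsTransform α β x * α / √(1 + (α * x / 2) ^ 2)) = 1 := by
  have hcosh := cosh_arsinh (α * x / 2)
  have hpos := (cosh_pos (arsinh (α * x / 2))).ne'
  have hg : bsTransform α β x ≠ 0 := mul_ne_zero hβ (exp_pos _).ne'
  rw [← hcosh]
  unfold bsTransform at hg ⊢
  rw [aBS'_mul_exp hβ]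
  field_simp

end SkewBS

open SkewBS in
theorem skewBS_quantile_general (α β lam q Q : ℝ) (hα : 0 < α) (hβ : 0 < β)
    (hQ : ∫ x in Set.Iic Q, 2 * stdPhi x * stdPhiCDF (lam * x) = q) :
    ∫ y in Set.Ioc (0 : ℝ) ((β / 4) * (α * Q + Real.sqrt ((α * Q) ^ 2 + 4)) ^ 2),
      skewBSpdf α β lam y = q := by
  rw [← bsTransform_eq, ← image_Iic_bsTransform hα hβ,
    integral_image_eq_integral_abs_deriv_smul measurableSet_Iic
      (fun x _ => (hasDerivAt_bsTransform α β x).hasDerivWithinAt)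
      (strictMono_bsTransform hα hβ).injective.injOn, ← hQ]
  refine setIntegral_congr_fun measurableSet_Iic fun x _ => ?_
  have hderiv_pos : 0 < bsTransform α β x * α / √(1 + (α * x / 2) ^ 2) :=
    div_pos (mul_pos (bsTransform_pos hβ α x) hα) (sqrt_pos.mpr (by positivity))
  rw [smul_eq_mul, abs_of_pos hderiv_pos, skewBSpdf, aBS_bsTransform hα.ne' hβ.ne']
  linear_combination (2 * stdPhi x * stdPhiCDF (lam * x)) * aBS'_bsTransform_mul_deriv hα.ne' hβ.ne' x

/-- if Q is the 100q-th quantile of the skew-normal SN(λ) distribution,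
then Ξ_q = (β/4)(αQ + √((αQ)² + 4))² is the 100q-th quantile of the skew-BS(α,β,λ)
distribution. -/
theorem skewBS_quantile (α β lam q Q : ℝ) (hα : 0 < α) (hβ : 0 < β)
    (hq₁ : 0 < q) (hq₂ : q < 1)
    (hQ : ∫ x in Set.Iic Q, 2 * stdPhi x * stdPhiCDF (lam * x) = q) :
    ∫ y in Set.Ioc (0 : ℝ) ((β / 4) * (α * Q + Real.sqrt ((α * Q) ^ 2 + 4)) ^ 2),
      skewBSpdf α β lam y = q :=
  skewBS_quantile_general α β lam q Q hα hβ hQ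
end

section
/- (Proposition 1, item 2: dispersion index inequality for the skew-QBS ACD model.) Let (ε_j)_{j ≥ 0} be independent, identically distributed nonnegative random variables with 0 < E[ε_1] < ∞ and E[ε_1²] < ∞, let c ∈ ℝ, and let (θ_j)_{j ≥ 1} be nonnegative reals such that both infinite products ∏_{j=1}^∞ E[e^{θ_j ε_1}] and ∏_{j=1}^∞ E[e^{2θ_j ε_1}] converge to finite positive limits. Define Y = ε_0 · e^c · ∏_{j=1}^∞ e^{θ_j ε_j}. Then E[Y²]/(E[Y])² = ( E[ε_1²]/(E[ε_1])² ) · ∏_{j=1}^∞ E[e^{2θ_j ε_1}] / ( ∏_{j=1}^∞ E[e^{θ_j ε_1}] )², and this quantity is ≥ E[ε_1²]/(E[ε_1])²; equivalently, writing 1 + δ_Y² = E[Y²]/(E[Y])² and 1 + δ² = E[ε_1²]/(E[ε_1])², one has 1 + δ_Y² = (1 + δ²) · ∏_j E[e^{2θ_j ε_1}]/(∏_j E[e^{θ_j ε_1}])² ≥ 1 + δ², so the dispersion (coefficient of variation) of the durations Y is at least that of the innovations ε. -/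
/-!
Because the innovations are independent and every factor `e^{θ_j ε_j}` is at least `1`, monotone
convergence lets the expectation pass through the infinite product, so that
`E[Y^k] = e^{kc} E[ε^k] ∏_j E[e^{kθ_j ε}]` for `k = 1, 2`. Dividing, the dispersion ratio of `Y` is
that of `ε` times `∏_j E[e^{2θ_j ε}] / (∏_j E[e^{θ_j ε}])²`, and this factor is at least `1` since
`E[e^{θ ε}]² ≤ E[e^{2θ ε}]` factor by factor, by Cauchy–Schwarz.
-/

open Real MeasureTheory Set ProbabilityTheory
open scoped ENNReal

namespace ENNReal

variable {ι : Type*} {f g : ι → ℝ≥0∞}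

theorem multipliable_of_one_le (hf : ∀ i, 1 ≤ f i) : Multipliable f :=
  ⟨_, hasProd_of_isLUB_of_one_le _ hf isLUB_iSup⟩

theorem tprod_pow_of_one_le (hf : ∀ i, 1 ≤ f i) (k : ℕ) :
    (∏' i, f i) ^ k = ∏' i, f i ^ k :=
  (multipliable_of_one_le hf).map_tprod (powMonoidHom k) (ENNReal.continuous_pow k)

theorem tprod_le_tprod_of_one_le (hf : ∀ i, 1 ≤ f i) (hfg : ∀ i, f i ≤ g i) :
    ∏' i, f i ≤ ∏' i, g i :=
  (multipliable_of_one_le hf).tprod_le_tprod hfg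
    (multipliable_of_one_le fun i => (hf i).trans (hfg i))

theorem tprod_nat_eq_iSup_prod_range {f : ℕ → ℝ≥0∞} (hf : ∀ i, 1 ≤ f i) :
    ∏' i, f i = ⨆ n, ∏ i ∈ Finset.range n, f i :=
  tendsto_nhds_unique (multipliable_of_one_le hf).hasProd.tendsto_prod_nat
    (tendsto_atTop_iSup fun _ _ h =>
      Finset.prod_le_prod_of_subset_of_one_le' (Finset.range_subset_range.2 h) fun i _ _ => hf i)

theorem mul_tprod_succ_eq_iSup_prod_range {f : ℕ → ℝ≥0∞} (hf : ∀ i, 1 ≤ f (i + 1)) :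
    f 0 * ∏' i, f (i + 1) = ⨆ n, ∏ i ∈ Finset.range (n + 1), f i := by
  rw [tprod_nat_eq_iSup_prod_range hf, ENNReal.mul_iSup]
  exact iSup_congr fun n => by rw [Finset.prod_range_succ', mul_comm]

theorem ofReal_exp_pow (x : ℝ) (k : ℕ) :
    ENNReal.ofReal (Real.exp x) ^ k = ENNReal.ofReal (Real.exp (k * x)) := by
  rw [← ENNReal.ofReal_pow (Real.exp_nonneg x), Real.exp_nat_mul]

theorem sq_mul_mul_div_mul_mul_sq {A B C P Q : ℝ≥0∞} (hC₀ : C ≠ 0) (hC : C ≠ ⊤) (hA₀ : A ≠ 0)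
    (hA : A ≠ ⊤) : C ^ 2 * (B * P) / (C * (A * Q)) ^ 2 = B / A ^ 2 * (P / Q ^ 2) := by
  rw [mul_pow, ENNReal.mul_div_mul_left _ _ (pow_ne_zero 2 hC₀) (ENNReal.pow_ne_top hC), mul_pow,
    ENNReal.mul_div_mul_comm (Or.inl (pow_ne_zero 2 hA₀)) (Or.inl (ENNReal.pow_ne_top hA))]

theorem one_le_ofReal_exp {x : ℝ} (hx : 0 ≤ x) : 1 ≤ ENNReal.ofReal (Real.exp x) :=
  ENNReal.one_le_ofReal.2 (Real.one_le_exp hx)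

end ENNReal

theorem Finset.monotone_prod_range_succ_of_one_le {M : Type*} [CommMonoid M] [Preorder M]
    [MulLeftMono M] {f : ℕ → M} (hf : ∀ i, 1 ≤ f (i + 1)) :
    Monotone fun n => ∏ i ∈ Finset.range (n + 1), f i :=
  monotone_nat_of_le_succ fun n => by
    rw [Finset.prod_range_succ _ (n + 1)]
    exact le_mul_of_one_le_right' (hf n)

namespace MeasureTheory

variable {Ω : Type*} [MeasurableSpace Ω] {μ : Measure Ω}

theorem sq_lintegral_le_lintegral_sq [IsProbabilityMeasure μ] {f : Ω → ℝ≥0∞}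
    (hf : AEMeasurable f μ) : (∫⁻ ω, f ω ∂μ) ^ 2 ≤ ∫⁻ ω, f ω ^ 2 ∂μ := by
  have holder := ENNReal.lintegral_mul_le_Lp_mul_Lq μ .two_two hf aemeasurable_const
    (g := fun _ => 1)
  simp only [Pi.mul_apply, mul_one, ENNReal.one_rpow, lintegral_const, measure_univ] at holder
  calc (∫⁻ ω, f ω ∂μ) ^ 2 ≤ ((∫⁻ ω, f ω ^ (2 : ℝ) ∂μ) ^ (1 / 2 : ℝ)) ^ 2 := by gcongr
    _ = ∫⁻ ω, f ω ^ 2 ∂μ := by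
      rw [← ENNReal.rpow_natCast, ← ENNReal.rpow_mul]
      norm_num

theorem sq_tprod_lintegral_le_tprod_lintegral_sq [IsProbabilityMeasure μ] {g : ℕ → Ω → ℝ≥0∞}
    (hg : ∀ j, AEMeasurable (g j) μ) (hone : ∀ j ω, 1 ≤ g j ω) :
    (∏' j, ∫⁻ ω, g j ω ∂μ) ^ 2 ≤ ∏' j, ∫⁻ ω, g j ω ^ 2 ∂μ := by
  have hint : ∀ j, 1 ≤ ∫⁻ ω, g j ω ∂μ := fun j => by
    simpa using lintegral_mono (μ := μ) (hone j)
  rw [ENNReal.tprod_pow_of_one_le hint]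
  exact ENNReal.tprod_le_tprod_of_one_le (fun j => one_le_pow₀ (hint j))
    fun j => sq_lintegral_le_lintegral_sq (hg j)

theorem lintegral_mul_tprod_of_iIndepFun {X : ℕ → Ω → ℝ≥0∞} (hX : ∀ j, Measurable (X j))
    (hind : iIndepFun X μ) (hone : ∀ j ω, 1 ≤ X (j + 1) ω) :
    ∫⁻ ω, X 0 ω * ∏' j, X (j + 1) ω ∂μ = (∫⁻ ω, X 0 ω ∂μ) * ∏' j, ∫⁻ ω, X (j + 1) ω ∂μ := by
  have := hind.isProbabilityMeasure
  have hint : ∀ j, 1 ≤ ∫⁻ ω, X (j + 1) ω ∂μ := fun j => by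
    simpa using lintegral_mono (μ := μ) (hone j)
  rw [lintegral_congr fun ω => ENNReal.mul_tprod_succ_eq_iSup_prod_range (f := (X · ω)) (hone · ω),
    lintegral_iSup (fun n => Finset.measurable_prod _ fun j _ => hX j)
      fun m n h ω => Finset.monotone_prod_range_succ_of_one_le (hone · ω) h,
    ENNReal.mul_tprod_succ_eq_iSup_prod_range (f := fun j => ∫⁻ ω, X j ω ∂μ) hint]
  exact iSup_congr fun n => lintegral_prod_eq_prod_lintegral_of_indepFun _ X hind hX

end MeasureTheory

section Duration

variable {Ω : Type*} [MeasurableSpace Ω] {μ : Measure Ω} {ε : ℕ → Ω → ℝ} {θ : ℕ → ℝ}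

theorem lintegral_duration_pow (hmeas : ∀ j, Measurable (ε j)) (hnonneg : ∀ j ω, 0 ≤ ε j ω)
    (hindep : iIndepFun ε μ) (hident : IdentDistrib (ε 0) (ε 1) μ μ) (hθ : ∀ j, 0 ≤ θ j)
    (C : ℝ≥0∞) (hC : C ≠ ⊤) (k : ℕ) :
    ∫⁻ ω, (ENNReal.ofReal (ε 0 ω) * C *
        ∏' j, ENNReal.ofReal (Real.exp (θ (j + 1) * ε (j + 1) ω))) ^ k ∂μ
      = C ^ k * ((∫⁻ ω, ENNReal.ofReal (ε 1 ω ^ k) ∂μ) *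
          ∏' j, ∫⁻ ω, ENNReal.ofReal (Real.exp (k * θ (j + 1) * ε (j + 1) ω)) ∂μ) := by
  -- `Y ^ k = C ^ k * ∏ j, φ j (ε j)`, a product of functions of distinct innovations
  let φ : ℕ → ℝ → ℝ≥0∞
    | 0, x => ENNReal.ofReal (x ^ k)
    | j + 1, x => ENNReal.ofReal (Real.exp (k * θ (j + 1) * x))
  have hφ : ∀ j, Measurable (φ j) := by
    rintro (_ | j) <;> fun_prop
  have hone : ∀ j ω, 1 ≤ ENNReal.ofReal (Real.exp (θ (j + 1) * ε (j + 1) ω)) := fun j ω =>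
    ENNReal.one_le_ofReal_exp (mul_nonneg (hθ _) (hnonneg _ _))
  have hpow : ∀ ω, (ENNReal.ofReal (ε 0 ω) * C *
      ∏' j, ENNReal.ofReal (Real.exp (θ (j + 1) * ε (j + 1) ω))) ^ k
      = C ^ k * (φ 0 (ε 0 ω) * ∏' j, φ (j + 1) (ε (j + 1) ω)) := fun ω => by
    simp only [φ, mul_pow, ENNReal.tprod_pow_of_one_le (hone · ω), ENNReal.ofReal_exp_pow,
      ENNReal.ofReal_pow (hnonneg 0 ω), mul_assoc]
    ring
  have hfactor := lintegral_mul_tprod_of_iIndepFun (μ := μ) (X := fun j => φ j ∘ ε j)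
    (fun j => (hφ j).comp (hmeas j)) (hindep.comp φ hφ) fun j ω =>
      ENNReal.one_le_ofReal_exp (mul_nonneg (mul_nonneg k.cast_nonneg (hθ _)) (hnonneg _ _))
  have hfirst : ∫⁻ ω, φ 0 (ε 0 ω) ∂μ = ∫⁻ ω, φ 0 (ε 1 ω) ∂μ := (hident.comp (hφ 0)).lintegral_eq
  simp only [Function.comp_apply] at hfactor
  rw [lintegral_congr hpow, lintegral_const_mul' _ _ (ENNReal.pow_ne_top hC), hfactor, hfirst]

end Duration

theorem acd_dispersion_index_general
    {Ω : Type*} [MeasurableSpace Ω] (μ : Measure Ω)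
    (ε : ℕ → Ω → ℝ) (hmeas : ∀ j, Measurable (ε j))
    (hnonneg : ∀ j ω, 0 ≤ ε j ω)
    (hindep : iIndepFun ε μ)
    (hident : ∀ j : ℕ, Measure.map (ε j) μ = Measure.map (ε 1) μ)
    (c : ℝ) (θ : ℕ → ℝ) (hθ : ∀ j, 0 ≤ θ j)
    (hE1pos : 0 < ∫⁻ ω, ENNReal.ofReal (ε 1 ω) ∂μ)
    (hE1fin : (∫⁻ ω, ENNReal.ofReal (ε 1 ω) ∂μ) < ⊤)
    (hP1pos : 0 < ∏' j : ℕ, ∫⁻ ω, ENNReal.ofReal (Real.exp (θ (j + 1) * ε (j + 1) ω)) ∂μ)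
    (hP1fin : (∏' j : ℕ, ∫⁻ ω, ENNReal.ofReal (Real.exp (θ (j + 1) * ε (j + 1) ω)) ∂μ) < ⊤) :
    (∫⁻ ω, (ENNReal.ofReal (ε 0 ω) * ENNReal.ofReal (Real.exp c) *
          ∏' j : ℕ, ENNReal.ofReal (Real.exp (θ (j + 1) * ε (j + 1) ω))) ^ 2 ∂μ) /
        (∫⁻ ω, ENNReal.ofReal (ε 0 ω) * ENNReal.ofReal (Real.exp c) *
          ∏' j : ℕ, ENNReal.ofReal (Real.exp (θ (j + 1) * ε (j + 1) ω)) ∂μ) ^ 2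
      = ((∫⁻ ω, ENNReal.ofReal (ε 1 ω ^ 2) ∂μ) /
            (∫⁻ ω, ENNReal.ofReal (ε 1 ω) ∂μ) ^ 2) *
          ((∏' j : ℕ, ∫⁻ ω, ENNReal.ofReal (Real.exp (2 * θ (j + 1) * ε (j + 1) ω)) ∂μ) /
            (∏' j : ℕ, ∫⁻ ω, ENNReal.ofReal (Real.exp (θ (j + 1) * ε (j + 1) ω)) ∂μ) ^ 2) ∧
    ((∫⁻ ω, ENNReal.ofReal (ε 1 ω ^ 2) ∂μ) / (∫⁻ ω, ENNReal.ofReal (ε 1 ω) ∂μ) ^ 2)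
      ≤ (∫⁻ ω, (ENNReal.ofReal (ε 0 ω) * ENNReal.ofReal (Real.exp c) *
            ∏' j : ℕ, ENNReal.ofReal (Real.exp (θ (j + 1) * ε (j + 1) ω))) ^ 2 ∂μ) /
          (∫⁻ ω, ENNReal.ofReal (ε 0 ω) * ENNReal.ofReal (Real.exp c) *
            ∏' j : ℕ, ENNReal.ofReal (Real.exp (θ (j + 1) * ε (j + 1) ω)) ∂μ) ^ 2 := by
  have := hindep.isProbabilityMeasure
  have hident₀ : IdentDistrib (ε 0) (ε 1) μ μ :=
    ⟨(hmeas 0).aemeasurable, (hmeas 1).aemeasurable, hident 0⟩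
  have hC : ENNReal.ofReal (Real.exp c) ≠ 0 := (ENNReal.ofReal_pos.2 (Real.exp_pos c)).ne'
  have hCS := sq_tprod_lintegral_le_tprod_lintegral_sq (μ := μ)
    (g := fun j ω => ENNReal.ofReal (Real.exp (θ (j + 1) * ε (j + 1) ω)))
    (fun j => by fun_prop) fun j ω => ENNReal.one_le_ofReal_exp (mul_nonneg (hθ _) (hnonneg _ _))
  simp only [ENNReal.ofReal_exp_pow, Nat.cast_ofNat, ← mul_assoc] at hCS
  have hmoment := lintegral_duration_pow hmeas hnonneg hindep hident₀ hθ
    (ENNReal.ofReal (Real.exp c)) ENNReal.ofReal_ne_top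
  have hmean := hmoment 1
  have hsecond := hmoment 2
  simp only [pow_one, Nat.cast_one, one_mul, Nat.cast_ofNat] at hmean hsecond
  rw [hmean, hsecond,
    ENNReal.sq_mul_mul_div_mul_mul_sq hC ENNReal.ofReal_ne_top hE1pos.ne' hE1fin.ne]
  refine ⟨rfl, le_mul_of_one_le_right' ?_⟩
  rwa [ENNReal.le_div_iff_mul_le (Or.inl (pow_ne_zero 2 hP1pos.ne'))
    (Or.inl (ENNReal.pow_ne_top hP1fin.ne)), one_mul]

/-- Proposition 1, item 2: dispersion index inequality for the
skew-QBS ACD model: for iid nonnegative innovations ε_j with 0 < E[ε] < ∞ and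
E[ε²] < ∞, and nonnegative coefficients θ_j whose moment products
P₁ = ∏_{j=1}^∞ E[e^{θ_j ε}] and P₂ = ∏_{j=1}^∞ E[e^{2θ_j ε}] are finite and positive,
the stationary duration Y = ε₀ e^c ∏_{j=1}^∞ e^{θ_j ε_j} satisfies
E[Y²]/(E[Y])² = (E[ε²]/(E[ε])²) · P₂/P₁² ≥ E[ε²]/(E[ε])², i.e. the dispersion index
of Y is at least that of the innovations. -/
theorem acd_dispersion_index
    {Ω : Type*} [MeasurableSpace Ω] (μ : Measure Ω) [IsProbabilityMeasure μ]
    (ε : ℕ → Ω → ℝ) (hmeas : ∀ j, Measurable (ε j))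
    (hnonneg : ∀ j ω, 0 ≤ ε j ω)
    (hindep : iIndepFun ε μ)
    (hident : ∀ j : ℕ, Measure.map (ε j) μ = Measure.map (ε 1) μ)
    (c : ℝ) (θ : ℕ → ℝ) (hθ : ∀ j, 0 ≤ θ j)
    (hE1pos : 0 < ∫⁻ ω, ENNReal.ofReal (ε 1 ω) ∂μ)
    (hE1fin : (∫⁻ ω, ENNReal.ofReal (ε 1 ω) ∂μ) < ⊤)
    (hE2fin : (∫⁻ ω, ENNReal.ofReal (ε 1 ω ^ 2) ∂μ) < ⊤)
    (hP1pos : 0 < ∏' j : ℕ, ∫⁻ ω, ENNReal.ofReal (Real.exp (θ (j + 1) * ε (j + 1) ω)) ∂μ)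
    (hP1fin : (∏' j : ℕ, ∫⁻ ω, ENNReal.ofReal (Real.exp (θ (j + 1) * ε (j + 1) ω)) ∂μ) < ⊤)
    (hP2pos : 0 < ∏' j : ℕ, ∫⁻ ω, ENNReal.ofReal (Real.exp (2 * θ (j + 1) * ε (j + 1) ω)) ∂μ)
    (hP2fin : (∏' j : ℕ, ∫⁻ ω, ENNReal.ofReal (Real.exp (2 * θ (j + 1) * ε (j + 1) ω)) ∂μ) < ⊤) :
    (∫⁻ ω, (ENNReal.ofReal (ε 0 ω) * ENNReal.ofReal (Real.exp c) *
          ∏' j : ℕ, ENNReal.ofReal (Real.exp (θ (j + 1) * ε (j + 1) ω))) ^ 2 ∂μ) /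
        (∫⁻ ω, ENNReal.ofReal (ε 0 ω) * ENNReal.ofReal (Real.exp c) *
          ∏' j : ℕ, ENNReal.ofReal (Real.exp (θ (j + 1) * ε (j + 1) ω)) ∂μ) ^ 2
      = ((∫⁻ ω, ENNReal.ofReal (ε 1 ω ^ 2) ∂μ) /
            (∫⁻ ω, ENNReal.ofReal (ε 1 ω) ∂μ) ^ 2) *
          ((∏' j : ℕ, ∫⁻ ω, ENNReal.ofReal (Real.exp (2 * θ (j + 1) * ε (j + 1) ω)) ∂μ) /
            (∏' j : ℕ, ∫⁻ ω, ENNReal.ofReal (Real.exp (θ (j + 1) * ε (j + 1) ω)) ∂μ) ^ 2) ∧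
    ((∫⁻ ω, ENNReal.ofReal (ε 1 ω ^ 2) ∂μ) / (∫⁻ ω, ENNReal.ofReal (ε 1 ω) ∂μ) ^ 2)
      ≤ (∫⁻ ω, (ENNReal.ofReal (ε 0 ω) * ENNReal.ofReal (Real.exp c) *
            ∏' j : ℕ, ENNReal.ofReal (Real.exp (θ (j + 1) * ε (j + 1) ω))) ^ 2 ∂μ) /
          (∫⁻ ω, ENNReal.ofReal (ε 0 ω) * ENNReal.ofReal (Real.exp c) *
            ∏' j : ℕ, ENNReal.ofReal (Real.exp (θ (j + 1) * ε (j + 1) ω)) ∂μ) ^ 2 :=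
  acd_dispersion_index_general μ ε hmeas hnonneg hindep hident c θ hθ hE1pos hE1fin hP1pos hP1fin
end
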